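/- Let R be a commutative ring and M a faithful multiplication R-module. Let B be the intersection of all ideals A of R with A • M = M. Then B = B², i.e., B equals its own square as an ideal. -/
import Mathlib


/-- `M` is a multiplication `R`-module if every submodule `N` of `M` has the form
`N = I • M` for some ideal `I` of `R`. -/
def IsMultiplicationModule (R : Type*) [CommRing R] (M : Type*) [AddCommGroup M]
    [Module R M] : Prop :=
  ∀ N : Submodule R M, ∃ I : Ideal R, N = I • (⊤ : Submodule R M)

/-- El-Bast–Smith dichotomy: for a multiplication module `M` and maximal ideal `P`,
either every element of `M` is annihilated by some `1 - p` with `p ∈ P`, or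
`M` is `P`-cyclic: `(1-p) • M ⊆ R m` for some `p ∈ P`, `m ∈ M`. -/
theorem mult_dichotomy {R : Type*} [CommRing R] {M : Type*} [AddCommGroup M] [Module R M]
    (hM : IsMultiplicationModule R M) (P : Ideal R) (hP : P.IsMaximal) :
    (∀ m : M, ∃ p ∈ P, (1 - p) • m = 0) ∨
    (∃ p ∈ P, ∃ m : M, ∀ y : M, ∃ r : R, (1 - p) • y = r • m) := by
  by_cases h : ∀ m : M, ∃ p ∈ P, (1 - p) • m = 0
  · exact Or.inl h
  push_neg at h
  obtain ⟨x, hx⟩ := h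
  right
  obtain ⟨A, hA⟩ := hM (Submodule.span R {x})
  have hxA : x ∈ A • (⊤ : Submodule R M) := hA ▸ Submodule.mem_span_singleton_self x
  have key : ∀ z ∈ A • (⊤ : Submodule R M), ∃ c : R, z = c • x ∧
      (c ∉ P → ∃ p ∈ P, ∃ m : M, ∀ y : M, ∃ r : R, (1 - p) • y = r • m) := by
    intro z hz
    refine Submodule.smul_induction_on hz ?_ ?_
    · intro a ha m0 _
      obtain ⟨Bi, hBi⟩ := hM (Submodule.span R {m0})
      have hm0 : m0 ∈ Bi • (⊤ : Submodule R M) := hBi ▸ Submodule.mem_span_singleton_self m0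
      -- inner claim : for w ∈ Bi • ⊤, a • w = c • x with c ∈ Bi
      have inner : ∀ w ∈ Bi • (⊤ : Submodule R M), ∃ c ∈ Bi, a • w = c • x := by
        intro w hw
        refine Submodule.smul_induction_on hw ?_ ?_
        · intro b hb n _
          have han : a • n ∈ Submodule.span R {x} := by
            rw [hA]; exact Submodule.smul_mem_smul ha trivial
          obtain ⟨s, hs⟩ := Submodule.mem_span_singleton.mp han
          refine ⟨b * s, Bi.mul_mem_right s hb, ?_⟩
          rw [smul_comm, ← hs, ← mul_smul]
        · rintro w₁ w₂ ⟨c₁, hc₁, e₁⟩ ⟨c₂, hc₂, e₂⟩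
          exact ⟨c₁ + c₂, Bi.add_mem hc₁ hc₂, by rw [smul_add, e₁, e₂, add_smul]⟩
      obtain ⟨c, hcBi, hc⟩ := inner m0 hm0
      refine ⟨c, hc, ?_⟩
      intro hcP
      obtain ⟨u, q, hq, huq⟩ := hP.exists_inv hcP
      refine ⟨q, hq, m0, ?_⟩
      intro y
      have hcy : c • y ∈ Submodule.span R {m0} := by
        rw [hBi]; exact Submodule.smul_mem_smul hcBi trivial
      obtain ⟨t, ht⟩ := Submodule.mem_span_singleton.mp hcy
      refine ⟨u * t, ?_⟩
      have h1q : (1 : R) - q = u * c := by linear_combination -huq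
      rw [h1q, mul_smul, ← ht, mul_smul]
    · rintro z₁ z₂ ⟨c₁, e₁, h₁⟩ ⟨c₂, e₂, h₂⟩
      refine ⟨c₁ + c₂, by rw [e₁, e₂, add_smul], ?_⟩
      intro hsum
      by_cases hc₁ : c₁ ∈ P
      · by_cases hc₂ : c₂ ∈ P
        · exact absurd (P.add_mem hc₁ hc₂) hsum
        · exact h₂ hc₂
      · exact h₁ hc₁
  obtain ⟨c, hcx, hc⟩ := key x hxA
  by_cases hcP : c ∈ P
  · exact absurd (by rw [sub_smul, one_smul, ← hcx, sub_self]) (hx c hcP)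
  · exact hc hcP

theorem stmt_6 (R : Type*) [CommRing R] (M : Type*) [AddCommGroup M] [Module R M]
    [FaithfulSMul R M] (hM : IsMultiplicationModule R M)
    (B : Ideal R) (hB : B = sInf {A : Ideal R | A • (⊤ : Submodule R M) = ⊤}) :
    B = B * B := by
  set S := {A : Ideal R | A • (⊤ : Submodule R M) = ⊤} with hS
  -- Step 1 : B • ⊤ = ⊤
  have hBM : B • (⊤ : Submodule R M) = ⊤ := by
    rw [eq_top_iff]
    intro x _
    set J : Ideal R :=
      Submodule.comap (LinearMap.toSpanSingleton R M x) (B • (⊤ : Submodule R M)) with hJdef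
    have memJ : ∀ r : R, r ∈ J ↔ r • x ∈ B • (⊤ : Submodule R M) := by
      intro r
      simp [hJdef, Submodule.mem_comap, LinearMap.toSpanSingleton_apply]
    have hJ : (1 : R) ∈ J := by
      by_contra h1
      have hJtop : J ≠ ⊤ := fun ht => h1 (ht ▸ Submodule.mem_top)
      obtain ⟨P, hPmax, hJP⟩ := Ideal.exists_le_maximal J hJtop
      have h1P : (1 : R) ∈ P := by
        rcases mult_dichotomy hM P hPmax with hi | ⟨p, hp, m, hm⟩
        · obtain ⟨p, hp, hpx⟩ := hi x
          have hmem : (1 - p) ∈ J := by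
            rw [memJ, hpx]; exact Submodule.zero_mem _
          have : (1 : R) = (1 - p) + p := by ring
          rw [this]; exact P.add_mem (hJP hmem) hp
        · set q : R := 1 - p with hq
          -- for each A ∈ S, q • x ∈ A • span {m}
          have hqA : ∀ A ∈ S, ∃ a ∈ A, q • x = a • m := by
            intro A hAS
            have hxA : x ∈ A • (⊤ : Submodule R M) := by
              rw [hAS]; trivial
            have claim : ∀ z ∈ A • (⊤ : Submodule R M), ∃ a ∈ A, q • z = a • m := by
              intro z hz
              refine Submodule.smul_induction_on hz ?_ ?_
              · intro a ha n _
                obtain ⟨r, hr⟩ := hm n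
                refine ⟨a * r, A.mul_mem_right r ha, ?_⟩
                rw [smul_comm, hr, smul_smul]
              · rintro z₁ z₂ ⟨a₁, ha₁, e₁⟩ ⟨a₂, ha₂, e₂⟩
                exact ⟨a₁ + a₂, A.add_mem ha₁ ha₂, by rw [smul_add, e₁, e₂, add_smul]⟩
            exact claim x hxA
          have hTopS : (⊤ : Ideal R) ∈ S := by
            simp [hS]
          obtain ⟨a₀, _, h₀⟩ := hqA ⊤ hTopS
          -- q * a₀ ∈ B
          have hqa₀ : q * a₀ ∈ B := by
            rw [hB, Submodule.mem_sInf]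
            intro A hAS
            obtain ⟨a, haA, hax⟩ := hqA A hAS
            have heq : q * a = q * a₀ := by
              refine FaithfulSMul.eq_of_smul_eq_smul (α := M) fun y => ?_
              obtain ⟨r, hr⟩ := hm y
              have ham : a • m - a₀ • m = 0 := by rw [← hax, ← h₀, sub_self]
              calc (q * a) • y = a • (q • y) := by
                      rw [mul_comm, mul_smul]
                _ = a • (r • m) := by rw [hr]
                _ = r • (a • m) := by rw [smul_comm]
                _ = r • (a₀ • m) := by rw [sub_eq_zero] at ham; rw [ham]
                _ = a₀ • (r • m) := by rw [smul_comm]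
                _ = a₀ • (q • y) := by rw [hr]
                _ = (q * a₀) • y := by rw [mul_comm, mul_smul]
            rw [← heq]
            exact Ideal.mul_mem_left A q haA
          have hqqJ : q * q ∈ J := by
            rw [memJ]
            have : (q * q) • x = (q * a₀) • m := by
              rw [mul_smul, h₀, smul_smul]
            rw [this]
            exact Submodule.smul_mem_smul hqa₀ trivial
          have : (1 : R) = q * q + p * (2 - p) := by rw [hq]; ring
          rw [this]
          exact P.add_mem (hJP hqqJ) (P.mul_mem_right _ hp)
      exact hPmax.ne_top (Ideal.eq_top_iff_one P |>.mpr h1P)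
    have := (memJ 1).mp hJ
    simpa using this
  -- Step 2 : B * B ∈ S, so B ≤ B * B
  have hBB : (B * B) ∈ S := by
    have : (B * B) • (⊤ : Submodule R M) = B • (B • (⊤ : Submodule R M)) := by
      rw [← Ideal.smul_eq_mul, Submodule.smul_assoc]
    simp only [hS, Set.mem_setOf_eq, this, hBM]
  have le1 : B ≤ B * B := by
    have h := sInf_le hBB
    rwa [← hB] at h
  have le2 : B * B ≤ B := Ideal.mul_le_right
  exact le_antisymm le1 le2
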